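/- arXiv:1904.02761 — 4 statements merged into one kernel-verified Lean document; each statement's English description precedes it below -/
import Mathlib

section
/- For each fixed μ ≥ 0, the function x ↦ ψ(x,μ) = x·exp(μ·√(2·log(1+x))) is convex on [0,∞). -/
noncomputable def psi (x μ : ℝ) : ℝ := x * Real.exp (μ * Real.sqrt (2 * Real.log (1 + x)))

/-!
For `x > 0`, with `S = √(2 log (1 + x))`,
`ψ'' = μ e^{μS} ((2 + x) S² + μ x S - x) / ((1 + x)² S³)`, and the bound
`log (1 + x) ≥ 2x / (x + 2)` gives `(2 + x) S² ≥ 4x ≥ x`, so `ψ'' ≥ 0`.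
-/

open Real Set

noncomputable def sqrtTwoLogOneAdd (x : ℝ) : ℝ := √(2 * log (1 + x))

local notation "S" => sqrtTwoLogOneAdd

lemma sqrtTwoLogOneAdd_pos {x : ℝ} (hx : 0 < x) : 0 < S x :=
  sqrt_pos.mpr (mul_pos two_pos (log_pos (by linarith)))

lemma sq_sqrtTwoLogOneAdd {x : ℝ} (hx : 0 ≤ x) : S x ^ 2 = 2 * log (1 + x) :=
  sq_sqrt (mul_nonneg zero_le_two (log_nonneg (by linarith)))

lemma hasDerivAt_sqrtTwoLogOneAdd {x : ℝ} (hx : 0 < x) :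
    HasDerivAt S (1 / ((1 + x) * S x)) x := by
  have hS := sqrtTwoLogOneAdd_pos hx
  have hlog : HasDerivAt (fun y => 2 * log (1 + y)) (2 / (1 + x)) x :=
    ((((hasDerivAt_id' x).const_add 1).log (by positivity)).const_mul 2).congr_deriv (by ring)
  refine (hlog.sqrt (sqrt_pos.mp hS).ne').congr_deriv ?_
  rw [← sqrtTwoLogOneAdd]
  field_simp

noncomputable def psiDeriv (μ x : ℝ) : ℝ := exp (μ * S x) * (1 + μ * x / ((1 + x) * S x))

noncomputable def psiDeriv2 (μ x : ℝ) : ℝ :=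
  μ * exp (μ * S x) * ((2 + x) * S x ^ 2 + μ * x * S x - x) / ((1 + x) ^ 2 * S x ^ 3)

lemma continuousOn_psi (μ : ℝ) : ContinuousOn (fun x => psi x μ) (Ici 0) := by
  unfold psi
  fun_prop (disch := intro x hx; rw [mem_Ici] at hx; positivity)

lemma hasDerivAt_psi (μ : ℝ) {x : ℝ} (hx : 0 < x) :
    HasDerivAt (fun y => psi y μ) (psiDeriv μ x) x := by
  have hS := sqrtTwoLogOneAdd_pos hx
  refine ((hasDerivAt_id' x).mul
    ((hasDerivAt_sqrtTwoLogOneAdd hx).const_mul μ).exp).congr_deriv ?_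
  rw [psiDeriv]
  field_simp

lemma hasDerivAt_psiDeriv (μ : ℝ) {x : ℝ} (hx : 0 < x) :
    HasDerivAt (psiDeriv μ) (psiDeriv2 μ x) x := by
  have hS := sqrtTwoLogOneAdd_pos hx
  have hS' := hasDerivAt_sqrtTwoLogOneAdd hx
  have hden : HasDerivAt (fun y => (1 + y) * S y) (1 * S x + (1 + x) * (1 / ((1 + x) * S x))) x :=
    ((hasDerivAt_id' x).const_add 1).mul hS'
  have hq : HasDerivAt (fun y => μ * y / ((1 + y) * S y)) _ x :=
    ((hasDerivAt_id' x).const_mul μ).div hden (by positivity)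
  refine ((hS'.const_mul μ).exp.mul (hq.const_add 1)).congr_deriv ?_
  rw [psiDeriv2]
  field_simp
  ring

lemma psiDeriv2_nonneg {μ x : ℝ} (hμ : 0 ≤ μ) (hx : 0 < x) : 0 ≤ psiDeriv2 μ x := by
  have hS := sqrtTwoLogOneAdd_pos hx
  have hlog := le_log_one_add_of_nonneg hx.le
  rw [div_le_iff₀ (by positivity)] at hlog
  have hsq : x ≤ (2 + x) * S x ^ 2 := by
    rw [sq_sqrtTwoLogOneAdd hx.le]
    linarith
  have hnum : 0 ≤ (2 + x) * S x ^ 2 + μ * x * S x - x := by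
    have : 0 ≤ μ * x * S x := by positivity
    linarith
  unfold psiDeriv2
  positivity

/-- For each fixed `μ ≥ 0`, `x ↦ ψ(x,μ)` is convex on `[0,∞)`. -/
theorem psi_convex_in_x (μ : ℝ) (hμ : 0 ≤ μ) :
    ConvexOn ℝ (Set.Ici (0 : ℝ)) (fun x => psi x μ) := by
  refine convexOn_of_hasDerivWithinAt2_nonneg (f' := psiDeriv μ) (f'' := psiDeriv2 μ)
    (convex_Ici 0) (continuousOn_psi μ) ?_ ?_ ?_ <;> rw [interior_Ici] <;> intro x hx
  · exact (hasDerivAt_psi μ hx).hasDerivWithinAt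
  · exact (hasDerivAt_psiDeriv μ hx).hasDerivWithinAt
  · exact psiDeriv2_nonneg hμ hx
end

section
/- For every c ≥ 1 and all x, μ ≥ 0, one has ψ(c·x, μ) ≤ ψ(c,μ)·ψ(x,μ), i.e. c·x·exp(μ√(2 log(1+c x))) ≤ c·x·exp(μ√(2 log(1+c)))·exp(μ√(2 log(1+x))). -/
open Real

theorem Real.sqrt_add_le_add_sqrt (a b : ℝ) : √(a + b) ≤ √a + √b := by
  rw [sqrt_le_left (by positivity), add_sq, sq_sqrt', sq_sqrt']
  have : 0 ≤ √a * √b := by positivity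
  linarith [le_max_left a 0, le_max_left b 0]

theorem Real.log_one_add_mul_le {c x : ℝ} (hc : 0 ≤ c) (hx : 0 ≤ x) :
    log (1 + c * x) ≤ log (1 + c) + log (1 + x) := by
  rw [← log_mul (by positivity) (by positivity)]
  exact log_le_log (by positivity) (by nlinarith)

theorem Real.sqrt_two_mul_log_one_add_mul_le {c x : ℝ} (hc : 0 ≤ c) (hx : 0 ≤ x) :
    √(2 * log (1 + c * x)) ≤ √(2 * log (1 + c)) + √(2 * log (1 + x)) :=
  calc √(2 * log (1 + c * x))
      ≤ √(2 * log (1 + c) + 2 * log (1 + x)) :=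
        sqrt_le_sqrt (by linarith [log_one_add_mul_le hc hx])
    _ ≤ √(2 * log (1 + c)) + √(2 * log (1 + x)) := sqrt_add_le_add_sqrt _ _

/-- For `c ≥ 1` and `x, μ ≥ 0`, `ψ(c·x, μ) ≤ ψ(c,μ)·ψ(x,μ)`. -/
theorem psi_submultiplicative (c x μ : ℝ) (hc : 1 ≤ c) (hx : 0 ≤ x) (hμ : 0 ≤ μ) :
    psi (c * x) μ ≤ psi c μ * psi x μ := by
  have hexp := sqrt_two_mul_log_one_add_mul_le (by linarith : 0 ≤ c) hx
  calc psi (c * x) μ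
      ≤ c * x * exp (μ * (√(2 * log (1 + c)) + √(2 * log (1 + x)))) := by
        unfold psi
        gcongr
    _ = psi c μ * psi x μ := by
        unfold psi
        rw [mul_add, exp_add]
        ring
end

section
/- For every real x, every y ≥ 0 and every μ > 0, one has e^x · y ≤ exp(x²/(2μ²)) + exp(2μ²)·ψ(y,μ), where ψ(y,μ) = y·exp(μ·√(2·log(1+y))). -/
/-- For every real `x`, `y ≥ 0`, `μ > 0`:
`e^x · y ≤ exp(x²/(2μ²)) + exp(2μ²)·ψ(y,μ)`. -/
theorem exp_mul_le_exp_add_psi (x y μ : ℝ) (hy : 0 ≤ y) (hμ : 0 < μ) :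
    Real.exp x * y ≤ Real.exp (x ^ 2 / (2 * μ ^ 2)) + Real.exp (2 * μ ^ 2) * psi y μ := by
  set t := Real.sqrt (2 * Real.log (1 + y)) with htdef
  have hlog : 0 ≤ Real.log (1 + y) := Real.log_nonneg (by linarith)
  have ht : 0 ≤ t := Real.sqrt_nonneg _
  have ht2 : t ^ 2 = 2 * Real.log (1 + y) := by
    rw [htdef, Real.sq_sqrt (by linarith)]
  have hψ : psi y μ = y * Real.exp (μ * t) := rfl
  by_cases h : x ≤ μ * t + 2 * μ ^ 2
  · have h1 : Real.exp x * y ≤ Real.exp (μ * t + 2 * μ ^ 2) * y :=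
      mul_le_mul_of_nonneg_right (Real.exp_le_exp.mpr h) hy
    have h2 : Real.exp (μ * t + 2 * μ ^ 2) * y = Real.exp (2 * μ ^ 2) * psi y μ := by
      rw [hψ, Real.exp_add]; ring
    have h3 : 0 < Real.exp (x ^ 2 / (2 * μ ^ 2)) := Real.exp_pos _
    linarith
  · push_neg at h
    have hy' : y ≤ Real.exp (t ^ 2 / 2) := by
      have : Real.exp (t ^ 2 / 2) = 1 + y := by
        rw [ht2]; rw [show 2 * Real.log (1 + y) / 2 = Real.log (1 + y) by ring]
        exact Real.exp_log (by linarith)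
      linarith
    have h1 : Real.exp x * y ≤ Real.exp (x + t ^ 2 / 2) := by
      rw [Real.exp_add]
      exact mul_le_mul_of_nonneg_left hy' (Real.exp_pos x).le
    have hxt : x + t ^ 2 / 2 ≤ x ^ 2 / (2 * μ ^ 2) := by
      have hx : 0 < x := lt_trans (by positivity) h
      rw [le_div_iff₀ (by positivity)]
      nlinarith [mul_nonneg hx.le (sub_nonneg.mpr h.le),
        mul_nonneg (mul_nonneg hμ.le ht) (sub_nonneg.mpr h.le),
        mul_nonneg (mul_nonneg hμ.le hμ.le) (sub_nonneg.mpr h.le)]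
    have h2 : Real.exp (x + t ^ 2 / 2) ≤ Real.exp (x ^ 2 / (2 * μ ^ 2)) :=
      Real.exp_le_exp.mpr hxt
    have h3 : 0 ≤ Real.exp (2 * μ ^ 2) * psi y μ := by
      rw [hψ]; positivity
    linarith
end

section
/- For all real γ > 0, all s > 0 and all v ≥ √2, the inequality (γ√s + v)²·v / (v² + γ√s·v − 1) − v ≤ γ√s + √2 holds; in particular the denominator v² + γ√s·v − 1 is positive. -/
/-- For `γ > 0`, `s > 0`, `v ≥ √2`, the denominator `v² + γ√s·v − 1` is positive and
`(γ√s + v)²·v / (v² + γ√s·v − 1) − v ≤ γ√s + √2`. -/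
theorem key_elementary_inequality (γ s v : ℝ) (hγ : 0 < γ) (hs : 0 < s)
    (hv : Real.sqrt 2 ≤ v) :
    0 < v ^ 2 + γ * Real.sqrt s * v - 1 ∧
      (γ * Real.sqrt s + v) ^ 2 * v / (v ^ 2 + γ * Real.sqrt s * v - 1) - v
        ≤ γ * Real.sqrt s + Real.sqrt 2 := by
  have h2 : Real.sqrt 2 ^ 2 = 2 := Real.sq_sqrt (by norm_num)
  have ha : 0 < γ * Real.sqrt s := mul_pos hγ (Real.sqrt_pos.mpr hs)
  have hvpos : 0 < v := lt_of_lt_of_le (Real.sqrt_pos.mpr two_pos) hv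
  have hv2 : 2 ≤ v ^ 2 := by
    rw [← h2]; exact pow_le_pow_left₀ (Real.sqrt_nonneg 2) hv 2
  have hD : 0 < v ^ 2 + γ * Real.sqrt s * v - 1 := by nlinarith [mul_pos ha hvpos]
  refine ⟨hD, ?_⟩
  rw [sub_le_iff_le_add, div_le_iff₀ hD]
  have h1 : (0:ℝ) ≤ Real.sqrt 2 * v - 1 := by nlinarith [Real.sqrt_nonneg 2]
  have h3 : (0:ℝ) ≤ (v - Real.sqrt 2) * (Real.sqrt 2 * v + 1) :=
    mul_nonneg (sub_nonneg.mpr hv) (by positivity)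
  nlinarith [mul_nonneg ha.le h1]
end
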